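/- arXiv:2505.09596 — 2 statements merged into one kernel-verified Lean document; each statement's English description precedes it below -/
import Mathlib

section
/- For n ≥ 4, there exists an orthogonal Latin hypercube of n runs with more than one factor (i.e., an n × k matrix with k ≥ 2 whose columns are permutations of {1,...,n}, such that any two distinct centered columns have zero inner product) if and only if n is not of the form 4m + 2 for an integer m. -/
/-!
Writing `c = (n - 1) / 2` for the common mean of the columns, the centred inner product of two
permutations `σ, τ` of `{0, …, n-1}` is `∑ σᵢ τᵢ - n c²`. Orthogonality therefore forces
`4 ∣ n (n - 1)²`, which fails exactly when `n ≡ 2 (mod 4)`.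

Conversely it suffices to find one permutation orthogonal to the identity. Framing a permutation
`f` of size `n` as `(n+2, 0, f₀+2, …, f_{n-1}+2, n+3, 1)` keeps the centred inner product with the
identity unchanged, because the four new corner terms cancel. Starting from the trivial solutions
for `n = 0, 1` and the explicit one `(4, 2, 0, 6, 5, 1, 3)` for `n = 7`, this covers every `n ≥ 4`
with `n ≢ 2 (mod 4)`.
-/

open Finset

section Necessity

variable {K : Type*} [Field K] [CharZero K]

lemma sum_range_natCast (n : ℕ) : ∑ i ∈ range n, (i : K) = n * (n - 1) / 2 := by
  induction n with
  | zero => simp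
  | succ n ih => rw [sum_range_succ, ih]; push_cast; ring

lemma sum_perm_val {n : ℕ} (σ : Equiv.Perm (Fin n)) :
    ∑ i, ((σ i : ℕ) : K) = n * (n - 1) / 2 := by
  rw [Equiv.sum_comp σ (fun i => ((i : ℕ) : K)), Fin.sum_univ_eq_sum_range (fun i => (i : K)),
    sum_range_natCast]

lemma four_mul_sum_centered_mul_centered {n : ℕ} (σ τ : Equiv.Perm (Fin n)) :
    4 * ∑ i, (((σ i : ℕ) : K) + 1 - (n + 1) / 2) * (((τ i : ℕ) : K) + 1 - (n + 1) / 2) =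
      4 * ∑ i, ((σ i : ℕ) : K) * (τ i : ℕ) - n * (n - 1) ^ 2 := by
  have hterm : ∀ i, (((σ i : ℕ) : K) + 1 - (n + 1) / 2) * (((τ i : ℕ) : K) + 1 - (n + 1) / 2) =
      ((σ i : ℕ) : K) * (τ i : ℕ) - (n - 1) / 2 * (σ i : ℕ) - (n - 1) / 2 * (τ i : ℕ) +
        ((n - 1) / 2) ^ 2 := fun i => by ring
  simp only [hterm, sum_add_distrib, sum_sub_distrib, ← mul_sum, sum_const, card_univ,
    Fintype.card_fin, nsmul_eq_mul, sum_perm_val]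
  ring

lemma sum_centered_mul_centered_ne_zero {n : ℕ} (hn : n % 4 = 2) (σ τ : Equiv.Perm (Fin n)) :
    ∑ i, (((σ i : ℕ) : K) + 1 - (n + 1) / 2) * (((τ i : ℕ) : K) + 1 - (n + 1) / 2) ≠ 0 := by
  intro h
  obtain ⟨m, rfl⟩ : ∃ m, n = 4 * m + 2 := ⟨n / 4, by omega⟩
  have hK : 4 * ∑ i, ((σ i : ℕ) : K) * (τ i : ℕ) = (4 * m + 2) * (4 * m + 1) ^ 2 := by
    have h4 := four_mul_sum_centered_mul_centered (K := K) σ τ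
    rw [h] at h4
    push_cast at h4
    linear_combination -h4
  have hnat : 4 * ∑ i, (σ i : ℕ) * (τ i : ℕ) = (4 * m + 2) * (4 * m + 1) ^ 2 := by
    exact_mod_cast hK
  have hmod := congrArg (· % 4) hnat
  simp [Nat.mul_mod, Nat.pow_mod, Nat.add_mod] at hmod

end Necessity

noncomputable def centeredDot (n : ℕ) (f : ℕ → ℕ) : ℝ :=
  ∑ p ∈ range n, ((p : ℝ) + 1 - (n + 1) / 2) * ((f p : ℝ) + 1 - (n + 1) / 2)

def frame (f : ℕ → ℕ) (n p : ℕ) : ℕ :=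
  if p = 0 then n + 2 else if p = 1 then 0 else if p = n + 2 then n + 3
  else if p = n + 3 then 1 else f (p - 2) + 2

lemma frame_mapsTo {f : ℕ → ℕ} {n : ℕ} (hf : Set.MapsTo f (Set.Iio n) (Set.Iio n)) :
    Set.MapsTo (frame f n) (Set.Iio (n + 4)) (Set.Iio (n + 4)) := by
  intro p hp
  have := @hf (p - 2)
  simp only [Set.mem_Iio, frame] at *
  split_ifs <;> omega

lemma frame_injOn {f : ℕ → ℕ} {n : ℕ} (hf : Set.MapsTo f (Set.Iio n) (Set.Iio n))
    (hinj : Set.InjOn f (Set.Iio n)) : Set.InjOn (frame f n) (Set.Iio (n + 4)) := by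
  intro p hp q hq hpq
  have hp' := @hf (p - 2)
  have hq' := @hf (q - 2)
  have hinj' := fun hp₂ hq₂ => @hinj (p - 2) hp₂ (q - 2) hq₂
  simp only [Set.mem_Iio, frame] at *
  split_ifs at hpq <;> omega

lemma centeredDot_frame (f : ℕ → ℕ) (n : ℕ) :
    centeredDot (n + 4) (frame f n) = centeredDot n f := by
  have hinner : ∀ p ∈ range n, frame f n (p + 2) = f p + 2 := fun p hp => by
    have := mem_range.mp hp
    rw [frame, if_neg (by omega), if_neg (by omega), if_neg (by omega), if_neg (by omega),
      Nat.add_sub_cancel]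
  rw [centeredDot, show range (n + 4) = range (n + 2 + 1 + 1) from rfl, sum_range_succ,
    sum_range_succ, sum_range_succ', sum_range_succ']
  have hmid : ∑ p ∈ range n, (((p + 1 + 1 : ℕ) : ℝ) + 1 - ((n + 4 : ℕ) + 1) / 2) *
      ((frame f n (p + 1 + 1) : ℝ) + 1 - ((n + 4 : ℕ) + 1) / 2) = centeredDot n f :=
    sum_congr rfl fun p hp => by rw [hinner p hp]; push_cast; ring
  rw [hmid]
  simp [frame]
  ring

/-- No permutation of size `3` is orthogonal to the identity, so the residue class `3 mod 4`
starts at the explicit solution of size `7`. -/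
def orthoPerm : ℕ → ℕ → ℕ
  | 7 => fun p => [4, 2, 0, 6, 5, 1, 3].getD p 0
  | n + 4 => frame (orthoPerm n) n
  | _ => id

lemma orthoPerm_mapsTo (n : ℕ) : Set.MapsTo (orthoPerm n) (Set.Iio n) (Set.Iio n) := by
  induction n using orthoPerm.induct with
  | case1 => intro p hp; simp only [Set.mem_Iio] at *; interval_cases p <;> simp [orthoPerm]
  | case2 n hn ih => rw [orthoPerm.eq_2 n hn]; exact frame_mapsTo ih
  | case3 n h7 h4 => rw [orthoPerm.eq_3 n h7 h4]; exact Set.mapsTo_id _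

lemma orthoPerm_injOn (n : ℕ) : Set.InjOn (orthoPerm n) (Set.Iio n) := by
  induction n using orthoPerm.induct with
  | case1 =>
    intro p hp q hq
    simp only [Set.mem_Iio] at *
    interval_cases p <;> interval_cases q <;> simp [orthoPerm]
  | case2 n hn ih => rw [orthoPerm.eq_2 n hn]; exact frame_injOn (orthoPerm_mapsTo n) ih
  | case3 n h7 h4 => rw [orthoPerm.eq_3 n h7 h4]; exact Set.injOn_id _

lemma centeredDot_orthoPerm {n : ℕ} (h2 : n % 4 ≠ 2) (h3 : n ≠ 3) :
    centeredDot n (orthoPerm n) = 0 := by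
  induction n using orthoPerm.induct with
  | case1 => norm_num [centeredDot, orthoPerm, sum_range_succ]
  | case2 n hn ih => rw [orthoPerm.eq_2 n hn, centeredDot_frame]; exact ih (by omega) hn
  | case3 n h7 h4 =>
    rw [orthoPerm.eq_3 n h7 h4]
    obtain rfl | rfl : n = 0 ∨ n = 1 := by
      by_contra h; exact h4 (n - 4) (by omega)
    all_goals simp [centeredDot]

lemma exists_perm_val_eq {n : ℕ} {f : ℕ → ℕ} (hf : Set.MapsTo f (Set.Iio n) (Set.Iio n))
    (hinj : Set.InjOn f (Set.Iio n)) : ∃ e : Equiv.Perm (Fin n), ∀ i, (e i : ℕ) = f i := by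
  let F : Fin n → Fin n := fun i => ⟨f i, hf i.isLt⟩
  have hF : Function.Injective F := fun i j h =>
    Fin.ext (hinj i.isLt j.isLt (congrArg Fin.val h))
  exact ⟨Equiv.ofBijective F (Finite.injective_iff_bijective.mp hF), fun _ => rfl⟩

/-- An orthogonal Latin hypercube of `n` runs with more than one factor exists
iff `n` is not of the form `4m+2`. Columns are permutations of `{1,...,n}`,
encoded as `Equiv.Perm (Fin n)` with values shifted by one. -/
theorem olh_exists_iff (n : ℕ) (hn : 4 ≤ n) :
    (∃ k : ℕ, 2 ≤ k ∧ ∃ c : Fin k → Equiv.Perm (Fin n),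
      ∀ a b : Fin k, a ≠ b →
        ∑ i : Fin n,
          (((c a i : ℕ) : ℝ) + 1 - ((n : ℝ) + 1) / 2) *
          (((c b i : ℕ) : ℝ) + 1 - ((n : ℝ) + 1) / 2) = 0)
    ↔ ¬ ∃ m : ℕ, n = 4 * m + 2 := by
  constructor
  · rintro ⟨k, hk, c, hc⟩ ⟨m, rfl⟩
    exact sum_centered_mul_centered_ne_zero (by omega) _ _
      (hc ⟨0, by omega⟩ ⟨1, by omega⟩ (by simp [Fin.ext_iff]))
  · intro hmod
    obtain ⟨e, he⟩ := exists_perm_val_eq (orthoPerm_mapsTo n) (orthoPerm_injOn n)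
    have horth : ∑ i : Fin n, (((i : ℕ) : ℝ) + 1 - ((n : ℝ) + 1) / 2) *
        (((e i : ℕ) : ℝ) + 1 - ((n : ℝ) + 1) / 2) = 0 := by
      simp only [he]
      rw [Fin.sum_univ_eq_sum_range (fun p => ((p : ℝ) + 1 - (n + 1) / 2) *
        ((orthoPerm n p : ℝ) + 1 - (n + 1) / 2))]
      exact centeredDot_orthoPerm (fun h2 => hmod ⟨n / 4, by omega⟩) (by omega)
    refine ⟨2, le_rfl, ![1, e], ?_⟩
    intro a b hab
    fin_cases a <;> fin_cases b
    · exact (hab rfl).elim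
    · simpa using horth
    · simpa [mul_comm] using horth
    · exact (hab rfl).elim
end

section
/- If n ≡ 2 (mod 4), then for any two permutations u, v of {1, ..., n}, the centered inner product Σ_{i=1}^n (u_i - (n+1)/2)(v_i - (n+1)/2) is nonzero; hence no orthogonal Latin hypercube with n runs and 2 or more factors exists. -/
/-!
Double every centered value: `a i = 2 (u i + 1) - (n + 1)` is an odd integer (as `n` is even)
and the column `a` sums to zero, and likewise for `b`. Since `(a i - 1) (b i - 1)` is a product
of two even numbers, summing gives `4 ∣ ∑ a i b i + n`, so `∑ a i b i ≡ 2 (mod 4)` cannot vanish.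
-/

open Finset

/-- `2 ((k + 1) - (n + 1) / 2)`: the centered level `k + 1`, doubled to stay in `ℤ`. -/
def twiceCentered (n : ℕ) (k : Fin n) : ℤ := 2 * (k : ℤ) + 1 - n

lemma twiceCentered_rev {n : ℕ} (k : Fin n) : twiceCentered n k.rev = -twiceCentered n k := by
  simp only [twiceCentered, Fin.val_rev]
  rw [Nat.cast_sub (by omega)]
  push_cast
  ring

lemma sum_twiceCentered (n : ℕ) : ∑ k : Fin n, twiceCentered n k = 0 := by
  have h := Fintype.sum_equiv Fin.revPerm (fun k => twiceCentered n k.rev) _ fun _ => rfl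
  simp only [twiceCentered_rev, sum_neg_distrib] at h
  linarith

lemma odd_twiceCentered {n : ℕ} (hn : Even n) (k : Fin n) : Odd (twiceCentered n k) := by
  obtain ⟨m, rfl⟩ := hn
  exact ⟨k - m, by unfold twiceCentered; push_cast; ring⟩

lemma four_dvd_sum_mul_add_card {ι : Type*} [Fintype ι] {a b : ι → ℤ}
    (ha : ∀ i, Odd (a i)) (hb : ∀ i, Odd (b i)) (ha₀ : ∑ i, a i = 0) (hb₀ : ∑ i, b i = 0) :
    4 ∣ ∑ i, a i * b i + Fintype.card ι := by
  have hsum : ∑ i, (a i - 1) * (b i - 1) = ∑ i, a i * b i + Fintype.card ι := by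
    simp only [sub_one_mul, mul_sub_one, sum_sub_distrib, ha₀, hb₀, sum_const, card_univ,
      nsmul_eq_mul, mul_one]
    ring
  rw [← hsum]
  refine dvd_sum fun i _ => ?_
  obtain ⟨x, hx⟩ := ha i
  obtain ⟨y, hy⟩ := hb i
  exact ⟨x * y, by rw [hx, hy]; ring⟩

/-- If `n ≡ 2 (mod 4)`, then any two permutations `u, v` of `{1,...,n}`
(encoded as `Equiv.Perm (Fin n)` with values shifted by one) have nonzero
centered inner product, so no orthogonal Latin hypercube with `n` runs and
two or more factors exists. -/
theorem no_olh_of_mod_four_eq_two (n : ℕ) (hn : n % 4 = 2)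
    (u v : Equiv.Perm (Fin n)) :
    ∑ i : Fin n,
      (((u i : ℕ) : ℝ) + 1 - ((n : ℝ) + 1) / 2) *
      (((v i : ℕ) : ℝ) + 1 - ((n : ℝ) + 1) / 2) ≠ 0 := by
  intro h
  have hn_even : Even n := Nat.even_iff.mpr (by omega)
  have hsum_mul : ∑ i, twiceCentered n (u i) * twiceCentered n (v i) = 0 := by
    have : ((∑ i, twiceCentered n (u i) * twiceCentered n (v i) : ℤ) : ℝ) = 4 * 0 := by
      rw [← h, mul_sum]
      push_cast [twiceCentered]
      exact sum_congr rfl fun i _ => by ring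
    exact_mod_cast this
  have hdvd := four_dvd_sum_mul_add_card
    (fun i => odd_twiceCentered hn_even (u i)) (fun i => odd_twiceCentered hn_even (v i))
    (by rw [Equiv.sum_comp u (twiceCentered n), sum_twiceCentered])
    (by rw [Equiv.sum_comp v (twiceCentered n), sum_twiceCentered])
  rw [hsum_mul, zero_add, Fintype.card_fin] at hdvd
  omega
end
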